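/- Let n ≥ 1 and let ι be a fixed-point-free involution of ZMod (2*n), with boundary permutation ρ defined by ρ(i) = ι(i) + 1. If ρ has exactly one orbit (i.e., ρ is a (2n)-cycle), then n is even. -/

import Mathlib

/-!
Writing `c` for the rotation `i ↦ i + 1` of `ZMod (2 * n)`, we have `ρ = c * ι`. Both `ρ` and `c`
act with a single orbit, so they are `2n`-cycles and hence odd, while the fixed-point-free involution `ι` is a product of `n` disjoint
transpositions. Comparing signs gives `-1 = -1 * (-1) ^ n`, so `n` is even.
-/

open Equiv.Perm

namespace Equiv.Perm

variable {α : Type*}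

theorem sameCycle_of_card_orbitRel_quotient_eq_one {σ : Perm α}
    (h : Nat.card (MulAction.orbitRel.Quotient (Subgroup.zpowers σ) α) = 1) (x y : α) :
    σ.SameCycle x y := by
  have : Subsingleton (MulAction.orbitRel.Quotient (Subgroup.zpowers σ) α) :=
    (Nat.card_eq_one_iff_unique.mp h).1
  obtain ⟨⟨_, i, rfl⟩, hi⟩ := Quotient.exact' <|
    Subsingleton.elim (α := MulAction.orbitRel.Quotient (Subgroup.zpowers σ) α) ⟦y⟧ ⟦x⟧
  exact ⟨i, hi⟩

theorem apply_ne_self_of_forall_sameCycle [Nontrivial α] {σ : Perm α}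
    (h : ∀ x y, σ.SameCycle x y) (x : α) : σ x ≠ x := by
  intro hx
  obtain ⟨y, hy⟩ := exists_ne x
  obtain ⟨i, hi⟩ := h x y
  exact hy (hi.symm.trans (zpow_apply_eq_self_of_apply_eq_self hx i))

variable [Fintype α] [DecidableEq α]

theorem sign_of_forall_sameCycle [Nontrivial α] {σ : Perm α} (h : ∀ x y, σ.SameCycle x y) :
    sign σ = -(-1) ^ Fintype.card α := by
  obtain ⟨x⟩ := ‹Nontrivial α›.to_nonempty
  have hσ : σ.IsCycle := ⟨x, apply_ne_self_of_forall_sameCycle h x, fun y _ => h x y⟩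
  have hsupp : σ.support = Finset.univ :=
    Finset.eq_univ_iff_forall.mpr fun y => mem_support.mpr (apply_ne_self_of_forall_sameCycle h y)
  rw [hσ.sign, hsupp, Finset.card_univ]

theorem sign_of_involutive_of_forall_apply_ne {σ : Perm α} (hinv : Function.Involutive σ)
    (hfree : ∀ x, σ x ≠ x) : sign σ = (-1) ^ (Fintype.card α / 2) := by
  have hsq : σ ^ 2 = 1 := Equiv.ext fun x => by simp [sq, hinv x]
  have hfix : Fintype.card (Function.fixedPoints σ) = 0 :=
    Fintype.card_eq_zero_iff.mpr ⟨fun x => hfree x x.2⟩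
  rw [sign_of_pow_two_eq_one hsq, hfix, Nat.sub_zero]

end Equiv.Perm

theorem ZMod.sameCycle_addLeft_one (m : ℕ) [NeZero m] (x y : ZMod m) :
    (Equiv.addLeft (1 : ZMod m)).SameCycle x y :=
  ⟨((y - x).val : ℤ), by simp [Equiv.zsmul_addLeft]⟩

theorem fpb_single_orbit_even_general (n : ℕ)
    (ι ρ : Equiv.Perm (ZMod (2 * n)))
    (hinv : Function.Involutive ι) (hfpf : ∀ i, ι i ≠ i)
    (hρ : ∀ i, ρ i = ι i + 1)
    (hone : Nat.card (MulAction.orbitRel.Quotient (Subgroup.zpowers ρ) (ZMod (2 * n))) = 1) :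
    Even n := by
  rcases n.eq_zero_or_pos with rfl | hn
  · exact Even.zero
  have : NeZero (2 * n) := ⟨by omega⟩
  have : Fact (1 < 2 * n) := ⟨by omega⟩
  have hfactor : ρ = Equiv.addLeft 1 * ι := Equiv.ext fun i => (hρ i).trans (add_comm _ _)
  have hsign := congrArg sign hfactor
  rw [sign_of_forall_sameCycle (sameCycle_of_card_orbitRel_quotient_eq_one hone), map_mul,
    sign_of_forall_sameCycle (ZMod.sameCycle_addLeft_one _),
    sign_of_involutive_of_forall_apply_ne hinv hfpf, ZMod.card,
    Nat.mul_div_cancel_left n two_pos] at hsign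
  exact (neg_one_pow_eq_one_iff_even (by decide)).mp (mul_eq_left.mp hsign.symm)

/-- If the boundary permutation `ρ` (given by `ρ i = ι i + 1`) of a fixed-point-free
involution `ι` of `ZMod (2*n)`, `n ≥ 1`, has exactly one orbit (i.e. `ρ` is a
`2n`-cycle), then `n` is even. -/
theorem fpb_single_orbit_even (n : ℕ) (hn : 1 ≤ n)
    (ι ρ : Equiv.Perm (ZMod (2 * n)))
    (hinv : Function.Involutive ι) (hfpf : ∀ i, ι i ≠ i)
    (hρ : ∀ i, ρ i = ι i + 1)
    (hone : Nat.card (MulAction.orbitRel.Quotient (Subgroup.zpowers ρ) (ZMod (2 * n))) = 1) :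
    Even n :=
  fpb_single_orbit_even_general n ι ρ hinv hfpf hρ hone
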